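/- arXiv:1405.3532 — 2 statements merged into one kernel-verified Lean document; each statement's English description precedes it below -/
import Mathlib

section
/- If ℓ ≥ 2 and 2^{ℓ−1} ≤ r ≤ 2^ℓ, then M₀(2^ℓ + r) = 2^ℓ − m₀(2^{ℓ+1} − r) and m₀(2^ℓ + r) = 2^ℓ − M₀(2^{ℓ+1} − r). The first equality holds also for ℓ = 1. -/
/-- The 2-kernel of a sequence `s : ℕ → ℤ`. -/
def kernel2 (s : ℕ → ℤ) : Set (ℕ → ℤ) :=
  {t | ∃ i j : ℕ, j < 2 ^ i ∧ t = fun n => s (2 ^ i * n + j)}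

/-- A sequence is 2-regular if the ℤ-module spanned by its 2-kernel is finitely generated. -/
def IsTwoRegular (s : ℕ → ℤ) : Prop :=
  (Submodule.span ℤ (kernel2 s)).FG

/-- A sequence is 2-automatic if its 2-kernel is finite. -/
def IsTwoAutomatic (s : ℕ → ℤ) : Prop :=
  (kernel2 s).Finite

/-- The period-doubling word, fixed point (starting with 0) of 0 ↦ 01, 1 ↦ 00:
its `n`-th letter is the parity of the 2-adic valuation of `n+1`. -/
def pd (n : ℕ) : ℕ := (n + 1).factorization 2 % 2

/-- The Thue–Morse word, fixed point (starting with 0) of 0 ↦ 01, 1 ↦ 10: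
its `n`-th letter is the parity of the binary digit sum of `n`. -/
def tm (n : ℕ) : ℕ := (Nat.digits 2 n).sum % 2

/-- The 2-block coding `x = block(p, 2)` of the period-doubling word. -/
def xw (n : ℕ) : ℕ := 2 * pd n + pd (n + 1)

/-- The 2-block coding `y = block(t, 2)` of the Thue–Morse word. -/
def yw (n : ℕ) : ℕ := 2 * tm n + tm (n + 1)

/-- The factor of an infinite word `w` of length `len` occurring at position `i`. -/
def factorAt (w : ℕ → ℕ) (i len : ℕ) : List ℕ :=
  (List.range len).map fun k => w (i + k)

/-- `u` is a factor of the infinite word `w`. -/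
def IsFactor (w : ℕ → ℕ) (u : List ℕ) : Prop :=
  ∃ i, u = factorAt w i u.length

/-- Maximal number of 0's in a factor of `x` of length `n`. -/
noncomputable def M0 (n : ℕ) : ℕ := sSup {k | ∃ i, (factorAt xw i n).count 0 = k}

/-- Minimal number of 0's in a factor of `x` of length `n`. -/
noncomputable def m0 (n : ℕ) : ℕ := sInf {k | ∃ i, (factorAt xw i n).count 0 = k}

noncomputable def D0 (n : ℕ) : ℕ := M0 n - m0 n

/-- Maximal number of 2's in a factor of `x` of length `n`. -/
noncomputable def M2c (n : ℕ) : ℕ := sSup {k | ∃ i, (factorAt xw i n).count 2 = k}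

/-- Minimal number of 2's in a factor of `x` of length `n`. -/
noncomputable def m2c (n : ℕ) : ℕ := sInf {k | ∃ i, (factorAt xw i n).count 2 = k}

/-- The max-jump function for `M0`. -/
noncomputable def JM0 : ℕ → ℕ
  | 0 => 0
  | n + 1 => if M0 n < M0 (n + 1) then 1 else 0

/-- The min-jump function for `m0`. -/
noncomputable def jm0 (n : ℕ) : ℕ := if m0 n < m0 (n + 1) then 1 else 0

/-- Maximal total number of 1's and 2's in a factor of `y` of length `n`. -/
noncomputable def M12 (n : ℕ) : ℕ :=
  sSup {k | ∃ i, (factorAt yw i n).count 1 + (factorAt yw i n).count 2 = k}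

/-- Minimal total number of 1's and 2's in a factor of `y` of length `n`. -/
noncomputable def m12 (n : ℕ) : ℕ :=
  sInf {k | ∃ i, (factorAt yw i n).count 1 + (factorAt yw i n).count 2 = k}

noncomputable def D12 (n : ℕ) : ℕ := M12 n - m12 n

/-- Maximal total number of 0's and 3's in a factor of `y` of length `n`. -/
noncomputable def M03 (n : ℕ) : ℕ :=
  sSup {k | ∃ i, (factorAt yw i n).count 0 + (factorAt yw i n).count 3 = k}

/-- Minimal total number of 0's and 3's in a factor of `y` of length `n`. -/
noncomputable def m03 (n : ℕ) : ℕ :=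
  sInf {k | ∃ i, (factorAt yw i n).count 0 + (factorAt yw i n).count 3 = k}

/-- The max-jump function for `M03`. -/
noncomputable def JM03 (n : ℕ) : ℕ := if M03 (n - 1) < M03 n then 1 else 0

/-- The min-jump function for `m03`. -/
noncomputable def jm03 (n : ℕ) : ℕ := if m03 n < m03 (n + 1) then 1 else 0

/-- Abelian complexity: the number of abelian equivalence classes (i.e. distinct
multisets of letters) of factors of `w` of length `n`. -/
noncomputable def abComplexity (w : ℕ → ℕ) (n : ℕ) : ℕ :=
  Set.ncard {m : Multiset ℕ | ∃ i, (↑(factorAt w i n) : Multiset ℕ) = m}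

/-- The number of occurrences of `v` as a factor of `u`. -/
def countFactor (u v : List ℕ) : ℕ :=
  ((List.range (u.length + 1 - v.length)).filter
    fun i => decide ((u.drop i).take v.length = v)).length

/-- 2-abelian complexity: the number of 2-abelian equivalence classes of factors of `w`
of length `n`, where two words are 2-abelian equivalent when every word of length at most 2
occurs equally often in both. -/
noncomputable def abel2Complexity (w : ℕ → ℕ) (n : ℕ) : ℕ :=
  Set.ncard {f : List ℕ → ℕ |
    ∃ i, f = fun v => if v.length ≤ 2 then countFactor (factorAt w i n) v else 0}

/-- The morphism φ : 0 ↦ 12, 1 ↦ 12, 2 ↦ 00. -/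
def phiL : ℕ → List ℕ
  | 0 => [1, 2]
  | 1 => [1, 2]
  | 2 => [0, 0]
  | _ => []

/-- The morphism τ : 0 ↦ 0, 1 ↦ 2, 2 ↦ 1. -/
def tauL : ℕ → ℕ
  | 1 => 2
  | 2 => 1
  | n => n

/-
The 2's of `x` sit exactly at the 1's of `p`, and since `p (2n) = 0`, `p (2n+1) = 1 - p n`, the 1's
of a factor of `p` of length `m` are complementary to the 1's of a factor of length `⌊m/2⌋` or
`⌈m/2⌉`.  For the extremal counts `M₂`, `m₂` of 2's this gives
`M₂ m + m₂ ⌈m/2⌉ = ⌈m/2⌉` and `m₂ m + M₂ ⌊m/2⌋ = ⌊m/2⌋`, whence by induction on `l`,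
`M₂ a + m₂ b = 2^l` whenever `a + b = 3·2^l` and `2^l ≤ a ≤ 2^(l+1)`.  The 0's of `x` come in
pairs at positions `2n, 2n+1` with `p n = 1`, so `M₀ m = M₂ ⌈m/2⌉ + M₂ ⌊m/2⌋` (the two maxima are
attained simultaneously because lengthening a factor by one letter adds at most one 2), and
likewise for `m₀`; the theorem follows by adding two instances of the identity for `M₂ + m₂`.
-/

open Finset

section Extrema

variable {ι κ : Sort*}

theorem iSup_add_iInf_eq_of_forall_exists [Nonempty κ] {f : ι → ℕ} {g : κ → ℕ} {n : ℕ}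
    (h₁ : ∀ i, ∃ j, f i + g j ≤ n) (h₂ : ∀ j, ∃ i, n ≤ f i + g j) :
    iSup f + iInf g = n := by
  obtain ⟨j₀, hj₀⟩ := ciInf_mem g
  obtain ⟨i, hi⟩ := h₂ j₀
  have hf : BddAbove (Set.range f) := ⟨n, by rintro _ ⟨i, rfl⟩; obtain ⟨j, _⟩ := h₁ i; omega⟩
  obtain ⟨i₀, hi₀ : f i₀ = iSup f⟩ := Nat.sSup_mem (Set.range_nonempty_iff_nonempty.2 ⟨i⟩) hf
  obtain ⟨j, hj⟩ := h₁ i₀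
  have := le_ciSup hf i
  have := ciInf_le (OrderBot.bddBelow (Set.range g)) j
  omega

theorem exists_eq_iSup_and_eq_iSup [Nonempty ι] {f g : ι → ℕ} (hg : BddAbove (Set.range g))
    (hfg : ∀ i, f i ≤ g i) (hgf : ∀ i, g i ≤ f i + 1) :
    ∃ i, f i = iSup f ∧ g i = iSup g := by
  obtain ⟨b, hb⟩ := hg
  have hf : BddAbove (Set.range f) :=
    ⟨b, by rintro _ ⟨i, rfl⟩; exact (hfg i).trans (hb ⟨i, rfl⟩)⟩
  obtain ⟨i₀, hi₀ : f i₀ = iSup f⟩ := Nat.sSup_mem (Set.range_nonempty f) hf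
  obtain ⟨i₁, hi₁ : g i₁ = iSup g⟩ := Nat.sSup_mem (Set.range_nonempty g) ⟨b, hb⟩
  have := le_ciSup hf i₁
  have := le_ciSup ⟨b, hb⟩ i₀
  by_cases h : g i₀ = iSup g
  · exact ⟨i₀, hi₀, h⟩
  · exact ⟨i₁, by have := hfg i₀; have := hgf i₁; omega, hi₁⟩

theorem exists_eq_iInf_and_eq_iInf [Nonempty ι] {f g : ι → ℕ}
    (hfg : ∀ i, f i ≤ g i) (hgf : ∀ i, g i ≤ f i + 1) :
    ∃ i, f i = iInf f ∧ g i = iInf g := by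
  obtain ⟨i₀, hi₀⟩ := ciInf_mem f
  obtain ⟨i₁, hi₁⟩ := ciInf_mem g
  have := ciInf_le (OrderBot.bddBelow (Set.range f)) i₁
  have := ciInf_le (OrderBot.bddBelow (Set.range g)) i₀
  by_cases h : g i₀ = iInf g
  · exact ⟨i₀, hi₀, h⟩
  · exact ⟨i₁, by have := hfg i₁; have := hgf i₀; omega, hi₁⟩

end Extrema

theorem pd_two_mul (n : ℕ) : pd (2 * n) = 0 := by
  rw [pd, Nat.factorization_eq_zero_of_not_dvd (by omega)]

theorem pd_two_mul_add_one_add_pd (n : ℕ) : pd (2 * n + 1) + pd n = 1 := by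
  rw [pd, pd, show 2 * n + 1 + 1 = 2 * (n + 1) by ring,
    Nat.factorization_mul two_ne_zero n.succ_ne_zero]
  simp [Nat.prime_two.factorization]
  omega

theorem pd_le_one (n : ℕ) : pd n ≤ 1 := by
  unfold pd; omega

theorem pd_add_pd_succ_add_pd_div_two (k : ℕ) : pd k + pd (k + 1) + pd (k / 2) = 1 := by
  obtain ⟨n, rfl | rfl⟩ := Nat.even_or_odd' k
  · rw [show 2 * n / 2 = n by omega, pd_two_mul]
    have := pd_two_mul_add_one_add_pd n
    omega
  · rw [show (2 * n + 1) / 2 = n by omega, show 2 * n + 1 + 1 = 2 * (n + 1) by ring, pd_two_mul]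
    exact pd_two_mul_add_one_add_pd n

theorem indicator_xw_eq_two (n : ℕ) : (if xw n = 2 then 1 else 0) = pd n := by
  have := pd_add_pd_succ_add_pd_div_two n
  have := pd_le_one n
  unfold xw; split_ifs <;> omega

theorem indicator_xw_eq_zero (n : ℕ) : (if xw n = 0 then 1 else 0) = pd (n / 2) := by
  have := pd_add_pd_succ_add_pd_div_two n
  unfold xw; split_ifs <;> omega

theorem count_factorAt (w : ℕ → ℕ) (i n a : ℕ) :
    (factorAt w i n).count a = ∑ k ∈ range n, if w (i + k) = a then 1 else 0 := by
  induction n with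
  | zero => rfl
  | succ n ih =>
    rw [sum_range_succ, ← ih, factorAt, List.range_succ, List.map_append, List.count_append]
    simp [factorAt, List.count_singleton']

def pdOnes (i n : ℕ) : ℕ := ∑ k ∈ range n, pd (i + k)

theorem pdOnes_le (i n : ℕ) : pdOnes i n ≤ n := by
  simpa [pdOnes] using sum_le_sum fun k (_ : k ∈ range n) => pd_le_one (i + k)

theorem pdOnes_add (i n d : ℕ) : pdOnes i (n + d) = pdOnes i n + pdOnes (i + n) d := by
  simp only [pdOnes, sum_range_add, add_assoc]

theorem pdOnes_succ' (i n : ℕ) : pdOnes i (n + 1) = pd i + pdOnes (i + 1) n := by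
  simp only [pdOnes, sum_range_succ', add_zero, add_comm, add_left_comm]

theorem pdOnes_mono (i : ℕ) {m n : ℕ} (h : m ≤ n) : pdOnes i m ≤ pdOnes i n := by
  obtain ⟨d, rfl⟩ := Nat.exists_eq_add_of_le h
  rw [pdOnes_add]
  omega

theorem pdOnes_le_pdOnes_add_sub (i : ℕ) {m n : ℕ} (h : m ≤ n) :
    pdOnes i n ≤ pdOnes i m + (n - m) := by
  obtain ⟨d, rfl⟩ := Nat.exists_eq_add_of_le h
  have := pdOnes_le (i + m) d
  rw [pdOnes_add]
  omega

theorem pdOnes_two_mul_add_pdOnes : ∀ i m, pdOnes (2 * i) m + pdOnes i (m / 2) = m / 2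
  | _, 0 => rfl
  | i, 1 => by simp [pdOnes, pd_two_mul]
  | i, m + 2 => by
    have ih := pdOnes_two_mul_add_pdOnes (i + 1) m
    have := pd_two_mul_add_one_add_pd i
    rw [show (m + 2) / 2 = m / 2 + 1 by omega, pdOnes_succ', pdOnes_succ', pdOnes_succ' i,
      pd_two_mul, show 2 * i + 1 + 1 = 2 * (i + 1) by ring]
    omega

theorem pdOnes_two_mul_add_one_add_pdOnes (i m : ℕ) :
    pdOnes (2 * i + 1) m + pdOnes i ((m + 1) / 2) = (m + 1) / 2 := by
  simpa [pdOnes_succ', pd_two_mul] using pdOnes_two_mul_add_pdOnes i (m + 1)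

theorem sum_pd_div_two (j m : ℕ) :
    ∑ k ∈ range m, pd ((j + k) / 2) =
      pdOnes (j / 2) ((m + 1) / 2) + pdOnes ((j + 1) / 2) (m / 2) := by
  induction m generalizing j with
  | zero => rfl
  | succ m ih =>
    rw [sum_range_succ', add_zero]
    simp only [← add_assoc, add_right_comm j _ 1]
    rw [ih, show (m + 1 + 1) / 2 = m / 2 + 1 by omega, show (j + 1 + 1) / 2 = j / 2 + 1 by omega,
      pdOnes_succ']
    ring

theorem M2c_eq_iSup (n : ℕ) : M2c n = ⨆ i, pdOnes i n := by
  simp only [M2c, count_factorAt, indicator_xw_eq_two]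
  rfl

theorem m2c_eq_iInf (n : ℕ) : m2c n = ⨅ i, pdOnes i n := by
  simp only [m2c, count_factorAt, indicator_xw_eq_two]
  rfl

theorem M0_eq_iSup (n : ℕ) : M0 n = ⨆ i, ∑ k ∈ range n, pd ((i + k) / 2) := by
  simp only [M0, count_factorAt, indicator_xw_eq_zero]
  rfl

theorem m0_eq_iInf (n : ℕ) : m0 n = ⨅ i, ∑ k ∈ range n, pd ((i + k) / 2) := by
  simp only [m0, count_factorAt, indicator_xw_eq_zero]
  rfl

theorem M2c_add_m2c_half (m : ℕ) : M2c m + m2c ((m + 1) / 2) = (m + 1) / 2 := by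
  rw [M2c_eq_iSup, m2c_eq_iInf]
  refine iSup_add_iInf_eq_of_forall_exists (fun j => ⟨j / 2, ?_⟩)
    fun i => ⟨2 * i + 1, (pdOnes_two_mul_add_one_add_pdOnes i m).ge⟩
  obtain ⟨i, rfl | rfl⟩ := Nat.even_or_odd' j
  · have := pdOnes_two_mul_add_pdOnes i m
    have := pdOnes_le_pdOnes_add_sub i (show m / 2 ≤ (m + 1) / 2 by omega)
    rw [show 2 * i / 2 = i by omega]
    omega
  · rw [show (2 * i + 1) / 2 = i by omega]
    exact (pdOnes_two_mul_add_one_add_pdOnes i m).le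

theorem m2c_add_M2c_half (m : ℕ) : m2c m + M2c (m / 2) = m / 2 := by
  rw [M2c_eq_iSup, m2c_eq_iInf, add_comm]
  refine iSup_add_iInf_eq_of_forall_exists
    (fun i => ⟨2 * i, by rw [add_comm]; exact (pdOnes_two_mul_add_pdOnes i m).le⟩)
    fun j => ⟨j / 2, ?_⟩
  obtain ⟨i, rfl | rfl⟩ := Nat.even_or_odd' j
  · rw [show 2 * i / 2 = i by omega]
    have := pdOnes_two_mul_add_pdOnes i m
    omega
  · have := pdOnes_two_mul_add_one_add_pdOnes i m
    have := pdOnes_le_pdOnes_add_sub i (show m / 2 ≤ (m + 1) / 2 by omega)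
    rw [show (2 * i + 1) / 2 = i by omega]
    omega

theorem M0_eq (m : ℕ) : M0 m = M2c ((m + 1) / 2) + M2c (m / 2) := by
  simp only [M0_eq_iSup, M2c_eq_iSup, sum_pd_div_two]
  have hG : BddAbove (Set.range fun i => pdOnes i ((m + 1) / 2)) :=
    ⟨_, by rintro _ ⟨i, rfl⟩; exact pdOnes_le i _⟩
  have hF : BddAbove (Set.range fun i => pdOnes i (m / 2)) :=
    ⟨_, by rintro _ ⟨i, rfl⟩; exact pdOnes_le i _⟩
  have hle : m / 2 ≤ (m + 1) / 2 := by omega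
  obtain ⟨i, hiF, hiG⟩ := exists_eq_iSup_and_eq_iSup hG (fun i => pdOnes_mono i hle)
    fun i => (pdOnes_le_pdOnes_add_sub i hle).trans (by omega)
  refine le_antisymm (ciSup_le fun j => add_le_add (le_ciSup hG _) (le_ciSup hF _)) ?_
  refine le_ciSup_of_le ⟨(⨆ i, pdOnes i ((m + 1) / 2)) + ⨆ i, pdOnes i (m / 2), ?_⟩ (2 * i) ?_
  · rintro _ ⟨j, rfl⟩
    exact add_le_add (le_ciSup hG _) (le_ciSup hF _)
  · rw [show 2 * i / 2 = i by omega, show (2 * i + 1) / 2 = i by omega, ← hiF, ← hiG]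

theorem m0_eq (m : ℕ) : m0 m = m2c ((m + 1) / 2) + m2c (m / 2) := by
  simp only [m0_eq_iInf, m2c_eq_iInf, sum_pd_div_two]
  have hle : m / 2 ≤ (m + 1) / 2 := by omega
  obtain ⟨i, hiF, hiG⟩ := exists_eq_iInf_and_eq_iInf (fun i => pdOnes_mono i hle)
    fun i => (pdOnes_le_pdOnes_add_sub i hle).trans (by omega)
  refine le_antisymm (ciInf_le_of_le (OrderBot.bddBelow _) (2 * i) ?_)
    (le_ciInf fun j => add_le_add (ciInf_le (OrderBot.bddBelow _) _)
      (ciInf_le (OrderBot.bddBelow _) _))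
  rw [show 2 * i / 2 = i by omega, show (2 * i + 1) / 2 = i by omega, ← hiF, ← hiG]

theorem M2c_add_m2c_eq : ∀ (l a b : ℕ), a + b = 3 * 2 ^ l → 2 ^ l ≤ a → a ≤ 2 ^ (l + 1) →
    M2c a + m2c b = 2 ^ l
  | 0, a, b, hab, ha, ha' => by
    simp only [pow_zero, zero_add, pow_one] at ha ha' ⊢
    interval_cases a
    · obtain rfl : b = 2 := by omega
      simpa [add_comm] using m2c_add_M2c_half 2
    · obtain rfl : b = 1 := by omega
      simpa using M2c_add_m2c_half 2
  | l + 1, a, b, hab, ha, ha' => by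
    have ih := M2c_add_m2c_eq l (b / 2) ((a + 1) / 2) (by omega) (by omega) (by omega)
    have := M2c_add_m2c_half a
    have := m2c_add_M2c_half b
    omega

theorem M0_add_m0_eq {l a b : ℕ} (hl : 1 ≤ l) (hab : a + b = 3 * 2 ^ l) (ha : 2 ^ l ≤ a)
    (ha' : a ≤ 2 ^ (l + 1)) : M0 a + m0 b = 2 ^ l := by
  obtain ⟨k, rfl⟩ := Nat.exists_eq_add_of_le' hl
  have := pow_succ' 2 k
  have := pow_succ' 2 (k + 1)
  have := M2c_add_m2c_eq k ((a + 1) / 2) (b / 2) (by omega) (by omega) (by omega)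
  have := M2c_add_m2c_eq k (a / 2) ((b + 1) / 2) (by omega) (by omega) (by omega)
  rw [M0_eq, m0_eq]
  omega

theorem stmt12 :
    (∀ l, 1 ≤ l → ∀ r, 2 ^ (l - 1) ≤ r → r ≤ 2 ^ l →
      M0 (2 ^ l + r) + m0 (2 ^ (l + 1) - r) = 2 ^ l) ∧
    (∀ l, 2 ≤ l → ∀ r, 2 ^ (l - 1) ≤ r → r ≤ 2 ^ l →
      m0 (2 ^ l + r) + M0 (2 ^ (l + 1) - r) = 2 ^ l) := by
  refine ⟨fun l hl r _ hr => ?_, fun l hl r _ hr => ?_⟩ <;> have := pow_succ' 2 l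
  · exact M0_add_m0_eq hl (by omega) (by omega) (by omega)
  · rw [add_comm]
    exact M0_add_m0_eq (by omega) (by omega) (by omega) (by omega)
end

section
/- Let ℓ ≥ 1 and let r satisfy 0 ≤ r < 2^ℓ. Then Δ₁₂(2^ℓ + r) = Δ₁₂(r) + 1 if r ≤ 2^{ℓ−1}, and Δ₁₂(2^ℓ + r) = Δ₁₂(2^{ℓ+1} − r) if r > 2^{ℓ−1}. Moreover, m₁₂(2^ℓ + r) ≡ m₁₂(r) + ℓ (mod 2) if r ≤ 2^{ℓ−1}, and m₁₂(2^ℓ + r) ≡ m₁₂(2^{ℓ+1} − r) + Δ₁₂(2^{ℓ+1} − r) (mod 2) if r > 2^{ℓ−1}. -/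
/-!
A letter of `y` lies in `{1, 2}` exactly when `t` changes there, and since `t (2k) = t k` and
`t (2k+1) = 1 - t k`, the indicator `e` of `{1, 2}` in `y` satisfies `e (2k) = 1` and
`e (2k+1) = 1 - e k`. Hence a factor of `y` of length `2n` or `2n+1` starting at `2j` or `2j+1`
contains `2n` or `2n+1` letters from `{1, 2}` minus as many as the factor of length `n` or `n+1`
starting at `j`. Taking extrema turns this into `m₁₂ (2s) + M₁₂ s = 2s`, `M₁₂ (2s) + m₁₂ s = 2s`,
`m₁₂ (2s+1) + M₁₂ (s+1) = 2s+1` and `M₁₂ (2s+1) + m₁₂ s = 2s+1`. Induction on `ℓ` then gives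
`m₁₂ (2^ℓ + r) = m₁₂ (2^ℓ) + m₁₂ r` and `M₁₂ (2^ℓ + r) = m₁₂ (2^ℓ) + M₁₂ r + 1` for `2r ≤ 2^ℓ`,
and `m₁₂ u + M₁₂ u' = 2^(ℓ+1)` whenever `u + u' = 3 · 2^ℓ` with `u, u' ≥ 2^ℓ`.
-/

lemma tm_le_one (n : ℕ) : tm n ≤ 1 := Nat.le_of_lt_succ (Nat.mod_lt _ two_pos)

lemma tm_two_mul (k : ℕ) : tm (2 * k) = tm k := by
  rcases Nat.eq_zero_or_pos k with rfl | hk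
  · rfl
  · unfold tm
    rw [Nat.digits_def' one_lt_two (by omega), Nat.mul_mod_right, Nat.mul_div_cancel_left _ two_pos,
      List.sum_cons, zero_add]

lemma tm_two_mul_add_one (k : ℕ) : tm (2 * k + 1) = 1 - tm k := by
  have hk := tm_le_one k
  unfold tm at hk ⊢
  rw [Nat.digits_def' one_lt_two (by omega), List.sum_cons,
    show (2 * k + 1) % 2 = 1 by omega, show (2 * k + 1) / 2 = k by omega]
  omega

def count12 (i n : ℕ) : ℕ := (factorAt yw i n).count 1 + (factorAt yw i n).count 2

lemma count12_add (i m n : ℕ) : count12 i (m + n) = count12 i m + count12 (i + m) n := by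
  have h : factorAt yw i (m + n) = factorAt yw i m ++ factorAt yw (i + m) n := by
    simp only [factorAt, List.range_add, List.map_append, List.map_map, Function.comp_def,
      add_assoc]
  rw [count12, h, List.count_append, List.count_append]
  unfold count12
  omega

lemma count12_one (i : ℕ) : count12 i 1 = if tm i = tm (i + 1) then 0 else 1 := by
  have h0 := tm_le_one i
  have h1 := tm_le_one (i + 1)
  simp only [count12, factorAt, List.range_one, List.map_cons, List.map_nil, add_zero, yw]
  interval_cases tm i <;> interval_cases tm (i + 1) <;> rfl

lemma count12_le (i n : ℕ) : count12 i n ≤ n := by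
  induction n with
  | zero => simp [count12, factorAt]
  | succ n ih =>
    rw [count12_add, count12_one]
    split_ifs <;> omega

lemma count12_le_succ (i n : ℕ) : count12 i n ≤ count12 i (n + 1) := by
  rw [count12_add]
  exact Nat.le_add_right _ _

lemma count12_two_mul_one (k : ℕ) : count12 (2 * k) 1 = 1 := by
  have := tm_le_one k
  rw [count12_one, tm_two_mul, tm_two_mul_add_one, if_neg (by omega)]

lemma count12_two_mul_add_one_one (k : ℕ) : count12 (2 * k + 1) 1 + count12 k 1 = 1 := by
  have h := tm_le_one k
  have h' := tm_le_one (k + 1)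
  rw [count12_one, count12_one, show 2 * k + 1 + 1 = 2 * (k + 1) by ring, tm_two_mul,
    tm_two_mul_add_one]
  split_ifs <;> omega

lemma count12_two_mul_two_mul (j m : ℕ) : count12 (2 * j) (2 * m) + count12 j m = 2 * m := by
  induction m with
  | zero => simp [count12, factorAt]
  | succ m ih =>
    have hpair := count12_two_mul_add_one_one (j + m)
    rw [show 2 * (m + 1) = 2 * m + 1 + 1 by ring, count12_add, count12_add, count12_add,
      show 2 * j + 2 * m = 2 * (j + m) by ring, count12_two_mul_one,
      show 2 * j + (2 * m + 1) = 2 * (j + m) + 1 by ring]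
    omega

lemma count12_two_mul_two_mul_add_one (j m : ℕ) :
    count12 (2 * j) (2 * m + 1) + count12 j m = 2 * m + 1 := by
  rw [count12_add, show 2 * j + 2 * m = 2 * (j + m) by ring, count12_two_mul_one]
  have := count12_two_mul_two_mul j m
  omega

lemma count12_two_mul_add_one_two_mul (j m : ℕ) :
    count12 (2 * j + 1) (2 * m) + count12 j m = 2 * m := by
  have h := count12_add (2 * j) 1 (2 * m)
  rw [add_comm 1, count12_two_mul_one] at h
  have := count12_two_mul_two_mul_add_one j m
  omega

lemma count12_two_mul_add_one_two_mul_add_one (j m : ℕ) :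
    count12 (2 * j + 1) (2 * m + 1) + count12 j (m + 1) = 2 * m + 1 := by
  rw [count12_add, count12_add, show 2 * j + 1 + 2 * m = 2 * (j + m) + 1 by ring]
  have := count12_two_mul_add_one_two_mul j m
  have := count12_two_mul_add_one_one (j + m)
  omega

lemma bddAbove_range_count12 (n : ℕ) : BddAbove (Set.range (count12 · n)) :=
  ⟨n, by rintro _ ⟨i, rfl⟩; exact count12_le i n⟩

lemma count12_le_M12 (i n : ℕ) : count12 i n ≤ M12 n :=
  le_csSup (bddAbove_range_count12 n) (Set.mem_range_self i)

lemma m12_le_count12 (i n : ℕ) : m12 n ≤ count12 i n := Nat.sInf_le ⟨i, rfl⟩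

lemma exists_count12_eq_M12 (n : ℕ) : ∃ i, count12 i n = M12 n :=
  Nat.sSup_mem (Set.range_nonempty (count12 · n)) (bddAbove_range_count12 n)

lemma exists_count12_eq_m12 (n : ℕ) : ∃ i, count12 i n = m12 n :=
  Nat.sInf_mem (Set.range_nonempty (count12 · n))

lemma M12_eq_of_forall_le {n k : ℕ} (hle : ∀ i, count12 i n ≤ k)
    (hex : ∃ i, count12 i n = k) : M12 n = k :=
  IsGreatest.csSup_eq ⟨hex, by rintro _ ⟨i, rfl⟩; exact hle i⟩

lemma m12_eq_of_forall_ge {n k : ℕ} (hge : ∀ i, k ≤ count12 i n)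
    (hex : ∃ i, count12 i n = k) : m12 n = k :=
  IsLeast.csInf_eq ⟨hex, by rintro _ ⟨i, rfl⟩; exact hge i⟩

lemma m12_le_M12 (n : ℕ) : m12 n ≤ M12 n := (m12_le_count12 0 n).trans (count12_le_M12 0 n)

lemma M12_le (n : ℕ) : M12 n ≤ n := by
  obtain ⟨i, hi⟩ := exists_count12_eq_M12 n
  exact hi ▸ count12_le i n

lemma M12_two_mul_add_m12 (s : ℕ) : M12 (2 * s) + m12 s = 2 * s := by
  obtain ⟨j, hj⟩ := exists_count12_eq_m12 s
  have := M12_le s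
  have := m12_le_M12 s
  suffices M12 (2 * s) = 2 * s - m12 s by omega
  refine M12_eq_of_forall_le (fun i => ?_) ⟨2 * j, ?_⟩
  · obtain ⟨j, rfl | rfl⟩ := Nat.even_or_odd' i
    · have := count12_two_mul_two_mul j s
      have := m12_le_count12 j s
      omega
    · have := count12_two_mul_add_one_two_mul j s
      have := m12_le_count12 j s
      omega
  · have := count12_two_mul_two_mul j s
    omega

lemma m12_two_mul_add_M12 (s : ℕ) : m12 (2 * s) + M12 s = 2 * s := by
  obtain ⟨j, hj⟩ := exists_count12_eq_M12 s
  have := M12_le s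
  suffices m12 (2 * s) = 2 * s - M12 s by omega
  refine m12_eq_of_forall_ge (fun i => ?_) ⟨2 * j, ?_⟩
  · obtain ⟨j, rfl | rfl⟩ := Nat.even_or_odd' i
    · have := count12_two_mul_two_mul j s
      have := count12_le_M12 j s
      omega
    · have := count12_two_mul_add_one_two_mul j s
      have := count12_le_M12 j s
      omega
  · have := count12_two_mul_two_mul j s
    omega

lemma M12_two_mul_add_one_add_m12 (s : ℕ) : M12 (2 * s + 1) + m12 s = 2 * s + 1 := by
  obtain ⟨j, hj⟩ := exists_count12_eq_m12 s
  have := M12_le s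
  have := m12_le_M12 s
  suffices M12 (2 * s + 1) = 2 * s + 1 - m12 s by omega
  refine M12_eq_of_forall_le (fun i => ?_) ⟨2 * j, ?_⟩
  · obtain ⟨j, rfl | rfl⟩ := Nat.even_or_odd' i
    · have := count12_two_mul_two_mul_add_one j s
      have := m12_le_count12 j s
      omega
    · have := count12_two_mul_add_one_two_mul_add_one j s
      have := count12_le_succ j s
      have := m12_le_count12 j s
      omega
  · have := count12_two_mul_two_mul_add_one j s
    omega

lemma m12_two_mul_add_one_add_M12 (s : ℕ) : m12 (2 * s + 1) + M12 (s + 1) = 2 * s + 1 := by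
  obtain ⟨j, hj⟩ := exists_count12_eq_M12 (s + 1)
  have := count12_le j (s + 1)
  suffices m12 (2 * s + 1) = 2 * s + 1 - M12 (s + 1) by omega
  refine m12_eq_of_forall_ge (fun i => ?_) ⟨2 * j + 1, ?_⟩
  · obtain ⟨j, rfl | rfl⟩ := Nat.even_or_odd' i
    · have := count12_two_mul_two_mul_add_one j s
      have := count12_le_succ j s
      have := count12_le_M12 j (s + 1)
      omega
    · have := count12_two_mul_add_one_two_mul_add_one j s
      have := count12_le_M12 j (s + 1)
      omega
  · have := count12_two_mul_add_one_two_mul_add_one j s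
    omega

lemma M12_zero : M12 0 = 0 := Nat.eq_zero_of_le_zero (M12_le 0)

lemma m12_zero : m12 0 = 0 := Nat.eq_zero_of_le_zero ((m12_le_M12 0).trans (M12_le 0))

lemma M12_one : M12 1 = 1 := by
  simpa [m12_zero] using M12_two_mul_add_one_add_m12 0

lemma m12_one : m12 1 = 0 := by
  simpa [M12_one] using m12_two_mul_add_one_add_M12 0

lemma m12_two_mul_add {N : ℕ} (hN : 2 ∣ N)
    (h : ∀ r, 2 * r ≤ N → m12 (N + r) = m12 N + m12 r ∧ M12 (N + r) = m12 N + M12 r + 1)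
    (r : ℕ) (hr : 2 * r ≤ 2 * N) :
    m12 (2 * N + r) = m12 (2 * N) + m12 r ∧ M12 (2 * N + r) = m12 (2 * N) + M12 r + 1 := by
  have hN0 := (h 0 (Nat.zero_le _)).2
  rw [add_zero, M12_zero] at hN0
  have := m12_two_mul_add_M12 N
  obtain ⟨m, rfl | rfl⟩ := Nat.even_or_odd' r
  · obtain ⟨h₁, h₂⟩ := h m (by omega)
    rw [show 2 * N + 2 * m = 2 * (N + m) by ring]
    have := m12_two_mul_add_M12 (N + m)
    have := M12_two_mul_add_m12 (N + m)
    have := m12_two_mul_add_M12 m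
    have := M12_two_mul_add_m12 m
    omega
  · obtain ⟨-, h₁⟩ := h (m + 1) (by omega)
    obtain ⟨h₂, -⟩ := h m (by omega)
    rw [← add_assoc] at h₁
    rw [show 2 * N + (2 * m + 1) = 2 * (N + m) + 1 by ring]
    have := m12_two_mul_add_one_add_M12 (N + m)
    have := M12_two_mul_add_one_add_m12 (N + m)
    have := m12_two_mul_add_one_add_M12 m
    have := M12_two_mul_add_one_add_m12 m
    omega

lemma m12_two_pow_add :
    ∀ l r, 2 * r ≤ 2 ^ l → m12 (2 ^ l + r) = m12 (2 ^ l) + m12 r ∧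
      M12 (2 ^ l + r) = m12 (2 ^ l) + M12 r + 1
  | 0, r, hr => by
    obtain rfl : r = 0 := by rw [pow_zero] at hr; omega
    simp [m12_zero, M12_zero, m12_one, M12_one]
  | 1, r, hr => by
    have h2 := m12_two_mul_add_M12 1
    have h2' := M12_two_mul_add_m12 1
    have h3 := m12_two_mul_add_one_add_M12 1
    have h3' := M12_two_mul_add_one_add_m12 1
    norm_num [m12_one, M12_one] at h2 h2' h3 h3'
    rw [pow_one]
    obtain rfl | rfl : r = 0 ∨ r = 1 := by omega
    all_goals norm_num [m12_zero, M12_zero, m12_one, M12_one]; omega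
  | l + 2, r, hr => by
    rw [pow_succ' 2 (l + 1)] at hr ⊢
    exact m12_two_mul_add (dvd_pow_self 2 (Nat.succ_ne_zero l)) (m12_two_pow_add (l + 1)) r hr

lemma M12_two_pow (l : ℕ) : M12 (2 ^ l) = m12 (2 ^ l) + 1 := by
  simpa [M12_zero] using (m12_two_pow_add l 0 (Nat.zero_le _)).2

lemma m12_two_pow_mod_two (l : ℕ) : m12 (2 ^ l) % 2 = l % 2 := by
  induction l with
  | zero => simp [m12_one]
  | succ l ih =>
    have h := m12_two_mul_add_M12 (2 ^ l)
    rw [← pow_succ', M12_two_pow] at h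
    have := M12_two_pow l
    omega

lemma m12_add_M12_of_add_eq_three_mul_two_pow :
    ∀ l u u', u + u' = 3 * 2 ^ l → 2 ^ l ≤ u → 2 ^ l ≤ u' → m12 u + M12 u' = 2 ^ (l + 1)
  | 0, u, u', hsum, hu, hu' => by
    have h2 := m12_two_mul_add_M12 1
    have h2' := M12_two_mul_add_m12 1
    norm_num [m12_one] at hsum hu hu' h2 h2' ⊢
    obtain ⟨rfl, rfl⟩ | ⟨rfl, rfl⟩ : u = 1 ∧ u' = 2 ∨ u = 2 ∧ u' = 1 := by omega
    · simp [m12_one, h2']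
    · exact h2
  | l + 1, u, u', hsum, hu, hu' => by
    have ih := m12_add_M12_of_add_eq_three_mul_two_pow l
    rw [pow_succ] at hsum hu hu' ⊢
    obtain ⟨s, rfl | rfl⟩ := Nat.even_or_odd' u <;> obtain ⟨s', rfl | rfl⟩ := Nat.even_or_odd' u'
    · have := ih s' s (by omega) (by omega) (by omega)
      have := m12_two_mul_add_M12 s
      have := M12_two_mul_add_m12 s'
      omega
    · omega
    · omega
    · have := ih s' (s + 1) (by omega) (by omega) (by omega)
      have := m12_two_mul_add_one_add_M12 s
      have := M12_two_mul_add_one_add_m12 s'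
      omega

theorem stmt17_general (l r : ℕ) (hr : r < 2 ^ l) :
    (2 * r ≤ 2 ^ l →
      D12 (2 ^ l + r) = D12 r + 1 ∧
      m12 (2 ^ l + r) % 2 = (m12 r + l) % 2) ∧
    (2 ^ l < 2 * r →
      D12 (2 ^ l + r) = D12 (2 ^ (l + 1) - r) ∧
      m12 (2 ^ l + r) % 2 = (m12 (2 ^ (l + 1) - r) + D12 (2 ^ (l + 1) - r)) % 2) := by
  have hpow : 2 ^ (l + 1) = 2 * 2 ^ l := pow_succ' 2 l
  refine ⟨fun hsmall => ?_, fun hlarge => ?_⟩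
  · obtain ⟨hm, hM⟩ := m12_two_pow_add l r hsmall
    have := m12_two_pow_mod_two l
    have := m12_le_M12 r
    unfold D12
    omega
  · have hsum : (2 ^ l + r) + (2 ^ (l + 1) - r) = 3 * 2 ^ l := by omega
    have h := m12_add_M12_of_add_eq_three_mul_two_pow l _ _ hsum (by omega) (by omega)
    have h' := m12_add_M12_of_add_eq_three_mul_two_pow l (2 ^ (l + 1) - r) (2 ^ l + r)
      (by omega) (by omega) (by omega)
    have := m12_le_M12 (2 ^ l + r)
    have := m12_le_M12 (2 ^ (l + 1) - r)
    unfold D12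
    omega

theorem stmt17 (l r : ℕ) (hl : 1 ≤ l) (hr : r < 2 ^ l) :
    (2 * r ≤ 2 ^ l →
      D12 (2 ^ l + r) = D12 r + 1 ∧
      m12 (2 ^ l + r) % 2 = (m12 r + l) % 2) ∧
    (2 ^ l < 2 * r →
      D12 (2 ^ l + r) = D12 (2 ^ (l + 1) - r) ∧
      m12 (2 ^ l + r) % 2 = (m12 (2 ^ (l + 1) - r) + D12 (2 ^ (l + 1) - r)) % 2) :=
  stmt17_general l r hr
end
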